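/- Let ρ and ρ̂ be states on ℂ^{d_A} such that the support of N_B(ρ) is contained in the support of N_B(ρ̂) and the support of N_E(ρ) is contained in the support of N_E(ρ̂). For λ ∈ [0,1] set ρ̄_λ = λρ + (1-λ)ρ̂ and define f(λ) = [λ D(N_B(ρ)‖N_B(ρ̄_λ)) + (1-λ) D(N_B(ρ̂)‖N_B(ρ̄_λ))] - [λ D(N_E(ρ)‖N_E(ρ̄_λ)) + (1-λ) D(N_E(ρ̂)‖N_E(ρ̄_λ))]. Then f(0) = 0 and f is right-differentiable at λ = 0 with derivative f′(0) = D(N_B(ρ)‖N_B(ρ̂)) − D(N_E(ρ)‖N_E(ρ̂)). -/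

import Mathlib

open Matrix BigOperators
open scoped ComplexOrder

noncomputable section

/-- Matrix logarithm via the spectral decomposition (junk value `0` off Hermitian matrices;
eigenvalue `0` contributes `Real.log 0 = 0`). -/
def matLog {n : Type*} [Fintype n] [DecidableEq n] (ρ : Matrix n n ℂ) : Matrix n n ℂ :=
  if h : ρ.IsHermitian then
    (h.eigenvectorUnitary : Matrix n n ℂ) *
      Matrix.diagonal (fun i => (Real.log (h.eigenvalues i) : ℂ)) *
      (h.eigenvectorUnitary : Matrix n n ℂ)ᴴ
  else 0

/-- Von Neumann entropy `H(ρ) = -Tr[ρ log ρ]`. -/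
def vnEntropy {n : Type*} [Fintype n] [DecidableEq n] (ρ : Matrix n n ℂ) : ℝ :=
  - (ρ * matLog ρ).trace.re

/-- Quantum relative entropy `D(ρ‖σ) = Tr[ρ (log ρ - log σ)]`. -/
def relEntropy {n : Type*} [Fintype n] [DecidableEq n] (ρ σ : Matrix n n ℂ) : ℝ :=
  (ρ * (matLog ρ - matLog σ)).trace.re

/-- A state: positive semidefinite with unit trace. -/
def IsState {n : Type*} [Fintype n] (ρ : Matrix n n ℂ) : Prop :=
  ρ.PosSemidef ∧ ρ.trace = 1

/-- A pure (rank-one) state `|ψ⟩⟨ψ|` for a unit vector `ψ`. -/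
def IsPureState {n : Type*} [Fintype n] (ρ : Matrix n n ℂ) : Prop :=
  ∃ ψ : n → ℂ, (∑ i, Complex.normSq (ψ i)) = 1 ∧ ρ = Matrix.vecMulVec ψ (star ψ)

/-- Support (range) inclusion for matrices. -/
def suppLE {n : Type*} [Fintype n] [DecidableEq n] (ρ σ : Matrix n n ℂ) : Prop :=
  LinearMap.range (Matrix.toLin' ρ) ≤ LinearMap.range (Matrix.toLin' σ)

/-- Partial trace over the second tensor factor. -/
def ptraceSnd {α β : Type*} [Fintype β] (M : Matrix (α × β) (α × β) ℂ) : Matrix α α ℂ :=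
  Matrix.of fun i j => ∑ k, M (i, k) (j, k)

/-- Partial trace over the first tensor factor. -/
def ptraceFst {α β : Type*} [Fintype α] (M : Matrix (α × β) (α × β) ℂ) : Matrix β β ℂ :=
  Matrix.of fun i j => ∑ k, M (k, i) (k, j)

variable {dA dB dE : ℕ}

/-- The channel `N_B(ρ) = Tr_E[U ρ U†]`. -/
def chanB (U : Matrix (Fin dB × Fin dE) (Fin dA) ℂ) (ρ : Matrix (Fin dA) (Fin dA) ℂ) :
    Matrix (Fin dB) (Fin dB) ℂ := ptraceSnd (U * ρ * Uᴴ)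

/-- The complementary channel `N_E(ρ) = Tr_B[U ρ U†]`. -/
def chanE (U : Matrix (Fin dB × Fin dE) (Fin dA) ℂ) (ρ : Matrix (Fin dA) (Fin dA) ℂ) :
    Matrix (Fin dE) (Fin dE) ℂ := ptraceFst (U * ρ * Uᴴ)

/-- Coherent information `I_c(ρ) = H(N_B(ρ)) - H(N_E(ρ))`. -/
def cohInfo (U : Matrix (Fin dB × Fin dE) (Fin dA) ℂ) (ρ : Matrix (Fin dA) (Fin dA) ℂ) : ℝ :=
  vnEntropy (chanB U ρ) - vnEntropy (chanE U ρ)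

/-- Holevo quantity of the ensemble `(p, σ)` with respect to the channel `N`. -/
def holevo {ι inn out : Type*} [Fintype ι] [Fintype out] [DecidableEq out]
    [AddCommMonoid (Matrix inn inn ℂ)]
    (N : Matrix inn inn ℂ → Matrix out out ℂ)
    (p : ι → ℝ) (σ : ι → Matrix inn inn ℂ) : ℝ :=
  vnEntropy (N (∑ u, (p u : ℂ) • σ u)) - ∑ u, p u * vnEntropy (N (σ u))

/-- A finite ensemble: a probability distribution together with states. -/
def IsEnsemble {ι inn : Type*} [Fintype ι] [Fintype inn]
    (p : ι → ℝ) (σ : ι → Matrix inn inn ℂ) : Prop :=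
  (∀ u, 0 ≤ p u) ∧ (∑ u, p u = 1) ∧ (∀ u, IsState (σ u))

/-- `Q^{(1)}`: optimized coherent information. -/
def Q1 (U : Matrix (Fin dB × Fin dE) (Fin dA) ℂ) : ℝ :=
  sSup { r | ∃ ρ, IsState ρ ∧ r = cohInfo U ρ }

/-- `C_p^{(1)}`: optimized difference of Holevo quantities. -/
def Cp1 (U : Matrix (Fin dB × Fin dE) (Fin dA) ℂ) : ℝ :=
  sSup { r | ∃ (m : ℕ) (p : Fin m → ℝ) (σ : Fin m → Matrix (Fin dA) (Fin dA) ℂ),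
    IsEnsemble p σ ∧ r = holevo (chanB U) p σ - holevo (chanE U) p σ }

/-!
With `σ_t = t β + (1 - t) β'` one has, for any `β, β'`,
`t D(β‖σ_t) + (1 - t) D(β'‖σ_t) = t Tr β log β + (1 - t) Tr β' log β' - Tr σ_t log σ_t`,
so it suffices to differentiate `φ t = Tr σ_t log σ_t` from the right at `0`.
Klein's inequality `Tr ρ - Tr σ ≤ D(ρ‖σ)`, applied to `(σ_t, β')` and to `(β', σ_t)`,
squeezes `(φ t - φ 0) / t` between `g 0` and `g t`, where
`g t = Tr (β - β') log σ_t + Tr (β - β')`.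
If `supp β ⊆ supp β'`, every `σ_t` with `t < 1` has the support of `β'`, so for `t ≤ 1/2` its
nonzero eigenvalues stay above a fixed `c > 0`. The logarithm is continuous on `{0} ∪ [c, R]`,
hence `log σ_t → log β'` by continuity of the functional calculus, and `g t → g 0`.
The correction `Tr (β - β')` is `Tr (ρ - ρ̂)` for both `N_B` and `N_E`, so it cancels in `f`.
-/

open Filter Topology Set

theorem sub_le_mul_log_sub_mul_log {p q : ℝ} (hp : 0 ≤ p) (hq : 0 < q) :
    p - q ≤ p * Real.log p - p * Real.log q := by
  rcases hp.eq_or_lt with rfl | hp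
  · simpa using hq.le
  have h := Real.self_sub_one_le_mul_log (div_nonneg hp.le hq.le)
  rw [Real.log_div hp.ne' hq.ne'] at h
  calc p - q = q * (p / q - 1) := by field_simp
    _ ≤ q * (p / q * (Real.log p - Real.log q)) := by gcongr
    _ = p * Real.log p - p * Real.log q := by field_simp

/-- The scalar form of Klein's inequality: `p`, `q` are the spectra of `ρ`, `σ`, and
`c j i = |⟪w j, u i⟫|²` for orthonormal eigenbases `u` of `ρ` and `w` of `σ`. -/
theorem sum_sub_sum_le_of_doublyStochastic {ι κ : Type*} [Fintype ι] [Fintype κ]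
    {p : ι → ℝ} {q : κ → ℝ} {c : κ → ι → ℝ} (hp : ∀ i, 0 ≤ p i) (hq : ∀ j, 0 ≤ q j)
    (hc : ∀ j i, 0 ≤ c j i) (hrow : ∀ j, ∑ i, c j i = 1) (hcol : ∀ i, ∑ j, c j i = 1)
    (hsupp : ∀ j, q j = 0 → ∀ i, c j i * p i = 0) :
    ∑ i, p i - ∑ j, q j ≤
      ∑ i, p i * Real.log (p i) - ∑ j, Real.log (q j) * ∑ i, c j i * p i := by
  have hp' : ∑ i, p i = ∑ j, ∑ i, c j i * p i := by
    rw [Finset.sum_comm]; simp [← Finset.sum_mul, hcol]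
  have hq' : ∑ j, q j = ∑ j, ∑ i, c j i * q j := by simp [← Finset.sum_mul, hrow]
  have hpp : ∑ i, p i * Real.log (p i) = ∑ j, ∑ i, c j i * (p i * Real.log (p i)) := by
    rw [Finset.sum_comm]; simp [← Finset.sum_mul, hcol]
  rw [hp', hq', hpp, ← Finset.sum_sub_distrib, ← Finset.sum_sub_distrib]
  simp_rw [Finset.mul_sum, ← Finset.sum_sub_distrib]
  refine Finset.sum_le_sum fun j _ => Finset.sum_le_sum fun i _ => ?_
  rcases (hq j).eq_or_lt with hqj | hqj
  · have hcp := hsupp j hqj.symm i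
    rw [← hqj, Real.log_zero, ← mul_assoc, hcp]
    simp
  · have := mul_le_mul_of_nonneg_left (sub_le_mul_log_sub_mul_log (hp i) hqj) (hc j i)
    linarith

theorem exists_pos_forall_eq_zero_or_le {ι : Type*} [Finite ι] {q : ι → ℝ}
    (hq : ∀ i, 0 ≤ q i) :
    ∃ a > 0, ∀ i, q i = 0 ∨ a ≤ q i := by
  have : ∀ᶠ a in 𝓝[>] (0 : ℝ), ∀ i, q i = 0 ∨ a ≤ q i := by
    refine Filter.eventually_all.2 fun i => ?_
    rcases (hq i).eq_or_lt with h | h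
    · exact Eventually.of_forall fun _ => Or.inl h.symm
    · filter_upwards [Ioo_mem_nhdsGT h] with a ha using Or.inr ha.2.le
  obtain ⟨a, h, ha⟩ := (this.and self_mem_nhdsWithin).exists
  exact ⟨a, ha, h⟩

theorem continuousOn_log_insert_zero_Icc {c : ℝ} (hc : 0 < c) (R : ℝ) :
    ContinuousOn Real.log (insert 0 (Icc c R)) := by
  rw [← singleton_union]
  exact (continuousOn_singleton _ _).union_of_isClosed
    (Real.continuousOn_log.mono fun x hx => (hc.trans_le hx.1).ne') isClosed_singleton isClosed_Icc

theorem hasDerivWithinAt_Ici_of_sandwich {φ g : ℝ → ℝ} {x : ℝ}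
    (hg : ContinuousWithinAt g (Ici x) x)
    (h : ∀ᶠ t in 𝓝[>] x, (t - x) * g x ≤ φ t - φ x ∧ φ t - φ x ≤ (t - x) * g t) :
    HasDerivWithinAt φ (g x) (Ici x) x := by
  rw [← hasDerivWithinAt_Ioi_iff_Ici, hasDerivWithinAt_iff_tendsto_slope' self_notMem_Ioi]
  have hg' : Tendsto g (𝓝[>] x) (𝓝 (g x)) :=
    hg.tendsto.mono_left (nhdsWithin_mono _ Ioi_subset_Ici_self)
  refine tendsto_of_tendsto_of_tendsto_of_le_of_le' tendsto_const_nhds hg' ?_ ?_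
  · filter_upwards [h, self_mem_nhdsWithin] with t ht (htx : x < t)
    rw [slope_def_field, le_div_iff₀ (sub_pos.2 htx)]
    linarith [ht.1]
  · filter_upwards [h, self_mem_nhdsWithin] with t ht (htx : x < t)
    rw [slope_def_field, div_le_iff₀ (sub_pos.2 htx)]
    linarith [ht.2]

section Spectral

variable {n : Type*} [Fintype n]

theorem conjTranspose_mul_mul_apply_self (V M : Matrix n n ℂ) (j : n) :
    (Vᴴ * M * V) j j = star (fun i => V i j) ⬝ᵥ (M *ᵥ fun i => V i j) := by
  simp only [mul_apply, dotProduct, mulVec, conjTranspose_apply, Pi.star_apply, Finset.mul_sum,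
    Finset.sum_mul, mul_assoc]
  exact Finset.sum_comm

theorem Matrix.IsHermitian.star_mulVec_dotProduct {A : Matrix n n ℂ} (hA : A.IsHermitian)
    (v w : n → ℂ) : star (A *ᵥ v) ⬝ᵥ w = star v ⬝ᵥ (A *ᵥ w) := by
  rw [star_mulVec, hA.eq, ← dotProduct_mulVec]

variable [DecidableEq n]

theorem re_mul_diagonal_mul_conjTranspose_apply_self (W : Matrix n n ℂ) (d : n → ℝ) (j : n) :
    ((W * diagonal (fun i => (d i : ℂ)) * Wᴴ) j j).re =
      ∑ i, Complex.normSq (W j i) * d i := by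
  simp only [mul_apply, diagonal_apply, conjTranspose_apply, mul_ite, mul_zero, Finset.sum_ite_eq',
    Finset.mem_univ, if_true, Complex.re_sum]
  refine Finset.sum_congr rfl fun i _ => ?_
  rw [mul_right_comm, Complex.star_def, Complex.mul_conj, ← Complex.ofReal_mul, Complex.ofReal_re]

theorem sum_normSq_row_eq_one {W : Matrix n n ℂ} (hW : W ∈ unitaryGroup n ℂ) (j : n) :
    ∑ i, Complex.normSq (W j i) = 1 := by
  have h : (W * Wᴴ) j j = (1 : Matrix n n ℂ) j j := by
    rw [← star_eq_conjTranspose, Unitary.mul_star_self_of_mem hW]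
  simp only [mul_apply, conjTranspose_apply, one_apply_eq, Complex.star_def, Complex.mul_conj] at h
  exact_mod_cast h

theorem sum_normSq_col_eq_one {W : Matrix n n ℂ} (hW : W ∈ unitaryGroup n ℂ) (i : n) :
    ∑ j, Complex.normSq (W j i) = 1 := by
  simpa [Complex.normSq_conj] using sum_normSq_row_eq_one (Unitary.star_mem hW) i

theorem relEntropy_eq_sub (ρ σ : Matrix n n ℂ) :
    relEntropy ρ σ = (ρ * matLog ρ).trace.re - (ρ * matLog σ).trace.re := by
  rw [relEntropy, Matrix.mul_sub, trace_sub, Complex.sub_re]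

namespace Matrix.IsHermitian

variable {A : Matrix n n ℂ}

theorem matLog_eq_cfc (hA : A.IsHermitian) : matLog A = cfc Real.log A := by
  rw [matLog, dif_pos hA, hA.cfc_eq, IsHermitian.cfc, Unitary.conjStarAlgAut_apply]
  rfl

theorem eq_eigenvectorUnitary_mul_diagonal_mul (hA : A.IsHermitian) :
    A = (hA.eigenvectorUnitary : Matrix n n ℂ) * diagonal (fun j => (hA.eigenvalues j : ℂ)) *
      (hA.eigenvectorUnitary : Matrix n n ℂ)ᴴ := by
  conv_lhs => rw [hA.spectral_theorem, Unitary.conjStarAlgAut_apply]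
  rfl

theorem conjTranspose_eigenvectorUnitary_mul_mul (hA : A.IsHermitian) :
    (hA.eigenvectorUnitary : Matrix n n ℂ)ᴴ * A * hA.eigenvectorUnitary =
      diagonal (fun j => (hA.eigenvalues j : ℂ)) := by
  have := hA.conjStarAlgAut_star_eigenvectorUnitary
  rw [Unitary.conjStarAlgAut_star_apply, star_eq_conjTranspose] at this
  exact this

theorem re_trace_mul_matLog (hA : A.IsHermitian) (M : Matrix n n ℂ) :
    (M * matLog A).trace.re = ∑ j, Real.log (hA.eigenvalues j) *
      (((hA.eigenvectorUnitary : Matrix n n ℂ)ᴴ * M * hA.eigenvectorUnitary) j j).re := by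
  rw [matLog, dif_pos hA, ← mul_assoc, ← mul_assoc, trace_mul_cycle, ← mul_assoc]
  simp [trace, mul_diagonal, Complex.re_sum, mul_comm]

theorem eigenvalues_eq_zero_or_le (hA : A.IsHermitian) {c : ℝ}
    (hc : ∀ v ∈ LinearMap.range (toLin' A), c * (star v ⬝ᵥ v).re ≤ (star v ⬝ᵥ A *ᵥ v).re)
    (j : n) : hA.eigenvalues j = 0 ∨ c ≤ hA.eigenvalues j := by
  refine or_iff_not_imp_left.2 fun h0 => ?_
  set b : n → ℂ := ⇑(hA.eigenvectorBasis j)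
  have hb : b ∈ LinearMap.range (toLin' A) := by
    refine ⟨((hA.eigenvalues j : ℂ))⁻¹ • b, ?_⟩
    rw [toLin'_apply, mulVec_smul, hA.mulVec_eigenvectorBasis, ← Complex.coe_smul, smul_smul,
      inv_mul_cancel₀ (by exact_mod_cast h0), one_smul]
  have hnorm : star b ⬝ᵥ b = 1 := by
    have h := conjTranspose_mul_mul_apply_self (hA.eigenvectorUnitary : Matrix n n ℂ) 1 j
    rw [mul_one, ← star_eq_conjTranspose, Unitary.coe_star_mul_self, one_apply_eq, one_mulVec]
      at h
    exact h.symm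
  have h := hc b hb
  rw [hnorm, Complex.one_re, mul_one] at h
  rw [hA.eigenvalues_eq j]
  exact h

end Matrix.IsHermitian

namespace Matrix.PosSemidef

theorem sub_le_relEntropy {ρ σ : Matrix n n ℂ} (hρ : ρ.PosSemidef) (hσ : σ.PosSemidef)
    (hker : ∀ v, σ *ᵥ v = 0 → ρ *ᵥ v = 0) :
    ρ.trace.re - σ.trace.re ≤ relEntropy ρ σ := by
  set V : Matrix n n ℂ := (hσ.1.eigenvectorUnitary : Matrix n n ℂ)
  set W : Matrix n n ℂ := Vᴴ * hρ.1.eigenvectorUnitary with hW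
  have hWu : W ∈ unitaryGroup n ℂ :=
    Submonoid.mul_mem _ (Unitary.star_mem hσ.1.eigenvectorUnitary.2) hρ.1.eigenvectorUnitary.2
  have hρV : Vᴴ * ρ * V = W * diagonal (fun i => (hρ.1.eigenvalues i : ℂ)) * Wᴴ := by
    conv_lhs => rw [hρ.1.eq_eigenvectorUnitary_mul_diagonal_mul]
    simp [hW, conjTranspose_mul, mul_assoc]
  have hsupp : ∀ j, hσ.1.eigenvalues j = 0 → ∀ i,
      Complex.normSq (W j i) * hρ.1.eigenvalues i = 0 := by
    intro j hj
    have hb : σ *ᵥ ⇑(hσ.1.eigenvectorBasis j) = 0 := by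
      rw [hσ.1.mulVec_eigenvectorBasis, hj, zero_smul]
    have h0 := congrArg Complex.re (conjTranspose_mul_mul_apply_self V ρ j)
    simp only [V, IsHermitian.eigenvectorUnitary_apply, hker _ hb, dotProduct_zero,
      Complex.zero_re] at h0
    rw [hρV, re_mul_diagonal_mul_conjTranspose_apply_self] at h0
    exact fun i => (Finset.sum_eq_zero_iff_of_nonneg fun i _ =>
      mul_nonneg (Complex.normSq_nonneg _) (hρ.eigenvalues_nonneg i)).1 h0 i (Finset.mem_univ i)
  rw [relEntropy_eq_sub, hρ.1.re_trace_mul_matLog, hσ.1.re_trace_mul_matLog,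
    hρ.1.conjTranspose_eigenvectorUnitary_mul_mul, hρV, hρ.1.trace_eq_sum_eigenvalues,
    hσ.1.trace_eq_sum_eigenvalues]
  simp only [diagonal_apply_eq, re_mul_diagonal_mul_conjTranspose_apply_self, Complex.re_sum,
    Complex.ofReal_re, mul_comm (Real.log (hρ.1.eigenvalues _))]
  exact sum_sub_sum_le_of_doublyStochastic hρ.eigenvalues_nonneg hσ.eigenvalues_nonneg
    (fun _ _ => Complex.normSq_nonneg _) (sum_normSq_row_eq_one hWu)
    (sum_normSq_col_eq_one hWu) hsupp

variable {A : Matrix n n ℂ}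

theorem eigenvalues_le_re_trace (hA : A.PosSemidef) (j : n) :
    hA.1.eigenvalues j ≤ A.trace.re := by
  rw [hA.1.trace_eq_sum_eigenvalues, Complex.re_sum]
  simpa using Finset.single_le_sum (fun i _ => hA.eigenvalues_nonneg i) (Finset.mem_univ j)

theorem exists_pos_mul_le_re_dotProduct_mulVec (hA : A.PosSemidef) :
    ∃ a > 0, ∀ v ∈ LinearMap.range (toLin' A), a * (star v ⬝ᵥ v).re ≤ (star v ⬝ᵥ A *ᵥ v).re := by
  obtain ⟨a, ha, hgap⟩ := exists_pos_forall_eq_zero_or_le hA.eigenvalues_nonneg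
  refine ⟨a, ha, ?_⟩
  rintro _ ⟨y, rfl⟩
  have hpsd : (A * A * A - (a : ℂ) • (A * A)).PosSemidef := by
    rw [hA.1.spectral_theorem, ← map_mul, ← map_mul, ← map_smul, ← map_sub,
      Unitary.conjStarAlgAut_apply, star_eq_conjTranspose]
    refine PosSemidef.mul_mul_conjTranspose_same ?_ _
    rw [diagonal_mul_diagonal, diagonal_mul_diagonal, ← diagonal_smul, diagonal_sub,
      posSemidef_diagonal_iff]
    intro j
    have key : 0 ≤ hA.1.eigenvalues j ^ 2 * (hA.1.eigenvalues j - a) := by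
      rcases hgap j with h | h
      · simp [h]
      · have := sub_nonneg.2 h; positivity
    simp only [Pi.smul_apply, Function.comp_apply, smul_eq_mul, Complex.coe_algebraMap]
    calc (0 : ℂ) ≤ ((hA.1.eigenvalues j ^ 2 * (hA.1.eigenvalues j - a) : ℝ) : ℂ) :=
          Complex.zero_le_real.2 key
      _ = _ := by push_cast; ring
  have h := Complex.le_def.1 (hpsd.dotProduct_mulVec_nonneg y)
  rw [sub_mulVec, smul_mulVec, ← mulVec_mulVec, ← mulVec_mulVec, ← mulVec_mulVec, dotProduct_sub,
    dotProduct_smul, Complex.sub_re, Complex.zero_re, smul_eq_mul, Complex.re_ofReal_mul] at h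
  rw [toLin'_apply, hA.1.star_mulVec_dotProduct, hA.1.star_mulVec_dotProduct]
  linarith [h.1]

end Matrix.PosSemidef

theorem mulVec_eq_zero_of_suppLE {β β' : Matrix n n ℂ} (hβ : β.IsHermitian)
    (hβ' : β'.IsHermitian) (hs : suppLE β β') {v : n → ℂ} (hv : β' *ᵥ v = 0) : β *ᵥ v = 0 := by
  obtain ⟨z, hz⟩ := hs ⟨β *ᵥ v, rfl⟩
  rw [toLin'_apply, toLin'_apply] at hz
  refine dotProduct_star_self_eq_zero.mp ?_
  calc star (β *ᵥ v) ⬝ᵥ (β *ᵥ v) = star v ⬝ᵥ (β *ᵥ (β *ᵥ v)) := hβ.star_mulVec_dotProduct _ _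
    _ = star (β' *ᵥ v) ⬝ᵥ z := by rw [← hz, hβ'.star_mulVec_dotProduct]
    _ = 0 := by rw [hv, star_zero, zero_dotProduct]

end Spectral

section Mix

variable {n : Type*}

def mix (β β' : Matrix n n ℂ) (t : ℝ) : Matrix n n ℂ := (t : ℂ) • β + (1 - (t : ℂ)) • β'

variable {β β' : Matrix n n ℂ}

@[simp] theorem mix_zero : mix β β' 0 = β' := by simp [mix]

theorem continuous_mix : Continuous (mix β β') := by unfold mix; fun_prop

theorem Matrix.IsHermitian.mix (hβ : β.IsHermitian) (hβ' : β'.IsHermitian) (t : ℝ) :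
    (mix β β' t).IsHermitian := by
  simp [_root_.mix, IsHermitian, conjTranspose_add, conjTranspose_smul, hβ.eq, hβ'.eq]

theorem Matrix.PosSemidef.mix (hβ : β.PosSemidef) (hβ' : β'.PosSemidef) {t : ℝ} (ht₀ : 0 ≤ t)
    (ht₁ : t ≤ 1) : (mix β β' t).PosSemidef := by
  have : (1 - (t : ℂ)) = ((1 - t : ℝ) : ℂ) := by push_cast; ring
  rw [_root_.mix, this]
  exact (hβ.smul (by exact_mod_cast ht₀)).add (hβ'.smul (by exact_mod_cast sub_nonneg.2 ht₁))

variable [Fintype n]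

theorem trace_mix_mul_re (X : Matrix n n ℂ) (t : ℝ) :
    (mix β β' t * X).trace.re = t * (β * X).trace.re + (1 - t) * (β' * X).trace.re := by
  simp [mix, Matrix.add_mul, Matrix.trace_add]

theorem re_dotProduct_mix_mulVec (v : n → ℂ) (t : ℝ) :
    (star v ⬝ᵥ mix β β' t *ᵥ v).re =
      t * (star v ⬝ᵥ β *ᵥ v).re + (1 - t) * (star v ⬝ᵥ β' *ᵥ v).re := by
  simp [mix, Matrix.add_mulVec, Matrix.smul_mulVec]

theorem mulVec_eq_zero_of_mix_mulVec_eq_zero (hβ : β.PosSemidef) (hβ' : β'.PosSemidef) {t : ℝ}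
    (ht₀ : 0 ≤ t) (ht₁ : t < 1) {v : n → ℂ} (hv : mix β β' t *ᵥ v = 0) : β' *ᵥ v = 0 := by
  rw [← hβ'.dotProduct_mulVec_zero_iff]
  have h := congrArg Complex.re (congrArg (star v ⬝ᵥ ·) hv)
  simp only [dotProduct_zero, Complex.zero_re, re_dotProduct_mix_mulVec] at h
  have hA := Complex.le_def.1 (hβ.dotProduct_mulVec_nonneg v)
  have hB := Complex.le_def.1 (hβ'.dotProduct_mulVec_nonneg v)
  simp only [Complex.zero_re, Complex.zero_im] at hA hB
  refine Complex.ext ?_ hB.2.symm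
  rw [Complex.zero_re]
  nlinarith [mul_nonneg ht₀ hA.1, mul_nonneg (sub_nonneg.2 ht₁.le) hB.1]

variable [DecidableEq n]

theorem range_mix_le (hs : suppLE β β') (t : ℝ) :
    LinearMap.range (toLin' (mix β β' t)) ≤ LinearMap.range (toLin' β') := by
  rintro _ ⟨y, rfl⟩
  rw [toLin'_apply, _root_.mix, add_mulVec, smul_mulVec, smul_mulVec]
  exact add_mem (Submodule.smul_mem _ _ (hs ⟨y, rfl⟩)) (Submodule.smul_mem _ _ ⟨y, rfl⟩)

theorem exists_spectrum_mix_subset (hβ : β.PosSemidef) (hβ' : β'.PosSemidef) (hs : suppLE β β') :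
    ∃ c > 0, ∃ R, ∀ t ∈ Icc (0 : ℝ) (1 / 2), spectrum ℝ (mix β β' t) ⊆ insert 0 (Icc c R) := by
  obtain ⟨a, ha, hquad⟩ := hβ'.exists_pos_mul_le_re_dotProduct_mulVec
  refine ⟨a / 2, by positivity, β.trace.re + β'.trace.re, fun t ht => ?_⟩
  have hσ := hβ.mix hβ' ht.1 (by linarith [ht.2])
  rw [hσ.1.spectrum_real_eq_range_eigenvalues]
  rintro _ ⟨j, rfl⟩
  have hgap := hσ.1.eigenvalues_eq_zero_or_le (c := a / 2) (fun v hv => by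
    have h := hquad v (range_mix_le hs t hv)
    have hβv := Complex.le_def.1 (hβ.dotProduct_mulVec_nonneg v)
    have hv0 := Complex.le_def.1 (dotProduct_star_self_nonneg v)
    simp only [Complex.zero_re] at hβv hv0
    rw [re_dotProduct_mix_mulVec]
    nlinarith [mul_le_mul_of_nonneg_left h (by linarith [ht.2] : (0 : ℝ) ≤ 1 - t),
      mul_nonneg ht.1 hβv.1,
      mul_nonneg (mul_nonneg (by linarith [ht.2] : (0 : ℝ) ≤ 1 / 2 - t) ha.le) hv0.1]) j
  have hup : hσ.1.eigenvalues j ≤ β.trace.re + β'.trace.re := by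
    have htr := trace_mix_mul_re (β := β) (β' := β') 1 t
    simp only [mul_one] at htr
    have := hσ.eigenvalues_le_re_trace j
    have h1 := Complex.le_def.1 hβ.trace_nonneg
    have h2 := Complex.le_def.1 hβ'.trace_nonneg
    simp only [Complex.zero_re] at h1 h2
    nlinarith [ht.1, ht.2]
  rcases hgap with h | h
  · exact Or.inl h
  · exact Or.inr ⟨h, hup⟩

theorem tendsto_matLog_mix (hβ : β.PosSemidef) (hβ' : β'.PosSemidef) (hs : suppLE β β') :
    Tendsto (fun t => matLog (mix β β' t)) (𝓝[≥] 0) (𝓝 (matLog β')) := by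
  obtain ⟨c, hc, R, hspec⟩ := exists_spectrum_mix_subset hβ hβ' hs
  have hev : ∀ᶠ t in 𝓝[≥] (0 : ℝ), t ∈ Icc (0 : ℝ) (1 / 2) := Icc_mem_nhdsGE (by norm_num)
  simp_rw [(hβ.1.mix hβ'.1 _).matLog_eq_cfc, hβ'.1.matLog_eq_cfc]
  have hmix : Tendsto (mix β β') (𝓝[≥] 0) (𝓝 β') :=
    (continuous_mix.tendsto' 0 β' mix_zero).mono_left nhdsWithin_le_nhds
  -- The continuity of `cfc` needs a C⋆-norm; the L2 operator norm induces the usual topology.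
  open scoped Matrix.Norms.L2Operator in
  exact hmix.cfc (isCompact_Icc.insert 0) Real.log (hev.mono hspec)
    (Eventually.of_forall fun t => hβ.1.mix hβ'.1 t)
    (by simpa using hspec 0 ⟨le_rfl, by norm_num⟩) hβ'.1 (continuousOn_log_insert_zero_Icc hc R)

theorem hasDerivWithinAt_re_trace_mix_mul_matLog (hβ : β.PosSemidef) (hβ' : β'.PosSemidef)
    (hs : suppLE β β') :
    HasDerivWithinAt (fun t => (mix β β' t * matLog (mix β β' t)).trace.re)
      (((β - β') * matLog β').trace.re + (β - β').trace.re) (Ici 0) 0 := by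
  set g : ℝ → ℝ := fun t => ((β - β') * matLog (mix β β' t)).trace.re + (β - β').trace.re
  have hg : ContinuousWithinAt g (Ici 0) 0 := by
    have hcont : Continuous fun M : Matrix n n ℂ => ((β - β') * M).trace.re := by fun_prop
    simpa [ContinuousWithinAt, g] using
      ((hcont.tendsto _).comp (tendsto_matLog_mix hβ hβ' hs)).add_const (β - β').trace.re
  refine (hasDerivWithinAt_Ici_of_sandwich hg ?_).congr_deriv (by simp [g])
  filter_upwards [Ioo_mem_nhdsGT one_pos] with t ht
  have hσ := hβ.mix hβ' ht.1.le ht.2.le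
  have lower := hσ.sub_le_relEntropy hβ' fun v hv => by
    simp [_root_.mix, add_mulVec, smul_mulVec, hv, mulVec_eq_zero_of_suppLE hβ.1 hβ'.1 hs hv]
  have upper := hβ'.sub_le_relEntropy hσ fun v hv =>
    mulVec_eq_zero_of_mix_mulVec_eq_zero hβ hβ' ht.1.le ht.2 hv
  have htr := trace_mix_mul_re (β := β) (β' := β') 1 t
  have hlogβ' := trace_mix_mul_re (β := β) (β' := β') (matLog β') t
  have hlogσ := trace_mix_mul_re (β := β) (β' := β') (matLog (mix β β' t)) t
  rw [relEntropy_eq_sub] at lower upper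
  simp only [mul_one, g, sub_mul, trace_sub, Complex.sub_re, mix_zero] at *
  constructor <;> nlinarith

theorem hasDerivWithinAt_average_relEntropy_mix (hβ : β.PosSemidef) (hβ' : β'.PosSemidef)
    (hs : suppLE β β') :
    HasDerivWithinAt
      (fun t => t * relEntropy β (mix β β' t) + (1 - t) * relEntropy β' (mix β β' t))
      (relEntropy β β' - (β - β').trace.re) (Ici 0) 0 := by
  set A := (β * matLog β).trace.re
  set B := (β' * matLog β').trace.re
  have hlin : HasDerivAt (fun t : ℝ => B + t * (A - B)) (A - B) 0 := by
    simpa using ((hasDerivAt_id (0 : ℝ)).mul_const (A - B)).const_add B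
  have hF : (fun t => t * relEntropy β (mix β β' t) + (1 - t) * relEntropy β' (mix β β' t)) =
      fun t => B + t * (A - B) - (mix β β' t * matLog (mix β β' t)).trace.re := by
    funext t
    rw [relEntropy_eq_sub, relEntropy_eq_sub, trace_mix_mul_re]
    ring
  rw [hF]
  refine (hlin.hasDerivWithinAt.sub
    (hasDerivWithinAt_re_trace_mix_mul_matLog hβ hβ' hs)).congr_deriv ?_
  rw [relEntropy_eq_sub]
  simp only [sub_mul, trace_sub, Complex.sub_re, A, B]
  ring

end Mix

section PartialTrace

variable {α β : Type*}

theorem ptraceSnd_eq_sum_submatrix [Fintype β] (M : Matrix (α × β) (α × β) ℂ) :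
    ptraceSnd M = ∑ k, M.submatrix (·, k) (·, k) := by
  ext i j
  simp [ptraceSnd, Matrix.sum_apply]

theorem ptraceFst_eq_sum_submatrix [Fintype α] (M : Matrix (α × β) (α × β) ℂ) :
    ptraceFst M = ∑ k, M.submatrix (k, ·) (k, ·) := by
  ext i j
  simp [ptraceFst, Matrix.sum_apply]

theorem Matrix.PosSemidef.ptraceSnd [Fintype β] {M : Matrix (α × β) (α × β) ℂ} (hM : M.PosSemidef) :
    (ptraceSnd M).PosSemidef := by
  rw [ptraceSnd_eq_sum_submatrix]
  exact posSemidef_sum _ fun k _ => hM.submatrix _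

theorem Matrix.PosSemidef.ptraceFst [Fintype α] {M : Matrix (α × β) (α × β) ℂ} (hM : M.PosSemidef) :
    (ptraceFst M).PosSemidef := by
  rw [ptraceFst_eq_sum_submatrix]
  exact posSemidef_sum _ fun k _ => hM.submatrix _

variable [Fintype α] [Fintype β]

theorem trace_ptraceSnd (M : Matrix (α × β) (α × β) ℂ) : (ptraceSnd M).trace = M.trace := by
  simp [trace, ptraceSnd, Fintype.sum_prod_type]

theorem trace_ptraceFst (M : Matrix (α × β) (α × β) ℂ) : (ptraceFst M).trace = M.trace := by
  simp [trace, ptraceFst, Fintype.sum_prod_type, Finset.sum_comm (γ := α)]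

end PartialTrace

section Channels

variable (U : Matrix (Fin dB × Fin dE) (Fin dA) ℂ)

theorem chanB_smul_add_smul (a b : ℂ) (ρ ρ' : Matrix (Fin dA) (Fin dA) ℂ) :
    chanB U (a • ρ + b • ρ') = a • chanB U ρ + b • chanB U ρ' := by
  ext i j
  simp [chanB, ptraceSnd, Matrix.mul_add, Matrix.add_mul, Finset.sum_add_distrib, Finset.mul_sum]

theorem chanE_smul_add_smul (a b : ℂ) (ρ ρ' : Matrix (Fin dA) (Fin dA) ℂ) :
    chanE U (a • ρ + b • ρ') = a • chanE U ρ + b • chanE U ρ' := by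
  ext i j
  simp [chanE, ptraceFst, Matrix.mul_add, Matrix.add_mul, Finset.sum_add_distrib, Finset.mul_sum]

theorem chanB_posSemidef {ρ : Matrix (Fin dA) (Fin dA) ℂ} (hρ : ρ.PosSemidef) :
    (chanB U ρ).PosSemidef :=
  (hρ.mul_mul_conjTranspose_same U).ptraceSnd

theorem chanE_posSemidef {ρ : Matrix (Fin dA) (Fin dA) ℂ} (hρ : ρ.PosSemidef) :
    (chanE U ρ).PosSemidef :=
  (hρ.mul_mul_conjTranspose_same U).ptraceFst

theorem trace_chanB_eq_trace_chanE (ρ : Matrix (Fin dA) (Fin dA) ℂ) :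
    (chanB U ρ).trace = (chanE U ρ).trace := by
  rw [chanB, chanE, trace_ptraceSnd, trace_ptraceFst]

end Channels

theorem divergence_difference_right_derivative_at_zero_general
    {dA dB dE : ℕ}
    (U : Matrix (Fin dB × Fin dE) (Fin dA) ℂ)
    (ρ ρhat : Matrix (Fin dA) (Fin dA) ℂ) (hρ : IsState ρ) (hρhat : IsState ρhat)
    (hsB : suppLE (chanB U ρ) (chanB U ρhat)) (hsE : suppLE (chanE U ρ) (chanE U ρhat))
    (f : ℝ → ℝ)
    (hf : ∀ lam ∈ Set.Icc (0 : ℝ) 1, f lam =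
      (lam * relEntropy (chanB U ρ) (chanB U ((lam : ℂ) • ρ + (1 - (lam : ℂ)) • ρhat))
        + (1 - lam) *
          relEntropy (chanB U ρhat) (chanB U ((lam : ℂ) • ρ + (1 - (lam : ℂ)) • ρhat)))
      - (lam * relEntropy (chanE U ρ) (chanE U ((lam : ℂ) • ρ + (1 - (lam : ℂ)) • ρhat))
        + (1 - lam) *
          relEntropy (chanE U ρhat) (chanE U ((lam : ℂ) • ρ + (1 - (lam : ℂ)) • ρhat)))) :
    f 0 = 0 ∧ HasDerivWithinAt f
      (relEntropy (chanB U ρ) (chanB U ρhat) - relEntropy (chanE U ρ) (chanE U ρhat))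
      (Set.Icc (0 : ℝ) 1) 0 := by
  simp only [chanB_smul_add_smul, chanE_smul_add_smul] at hf
  have hB := hasDerivWithinAt_average_relEntropy_mix (chanB_posSemidef U hρ.1)
    (chanB_posSemidef U hρhat.1) hsB
  have hE := hasDerivWithinAt_average_relEntropy_mix (chanE_posSemidef U hρ.1)
    (chanE_posSemidef U hρhat.1) hsE
  have htr : (chanB U ρ - chanB U ρhat).trace = (chanE U ρ - chanE U ρhat).trace := by
    rw [trace_sub, trace_sub, trace_chanB_eq_trace_chanE, trace_chanB_eq_trace_chanE]
  have hf0 : f 0 = 0 := by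
    rw [hf 0 (left_mem_Icc.2 zero_le_one)]
    simp [relEntropy]
  have hdiff := (hB.sub hE).mono (Icc_subset_Ici_self : Icc (0 : ℝ) 1 ⊆ Ici 0)
  rw [htr, sub_sub_sub_cancel_right] at hdiff
  exact ⟨hf0, hdiff.congr_of_mem (fun t ht => hf t ht) (left_mem_Icc.2 zero_le_one)⟩

/-- Along the segment `ρ̄_λ = λρ + (1-λ)ρ̂`, the function
`f(λ) = [λ D(N_B(ρ)‖N_B(ρ̄_λ)) + (1-λ) D(N_B(ρ̂)‖N_B(ρ̄_λ))]
      - [λ D(N_E(ρ)‖N_E(ρ̄_λ)) + (1-λ) D(N_E(ρ̂)‖N_E(ρ̄_λ))]`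
satisfies `f(0) = 0` and is right-differentiable at `0` with derivative
`f′(0) = D(N_B(ρ)‖N_B(ρ̂)) − D(N_E(ρ)‖N_E(ρ̂))`. -/
theorem divergence_difference_right_derivative_at_zero
    {dA dB dE : ℕ} (hdA : 1 ≤ dA) (hdB : 1 ≤ dB) (hdE : 1 ≤ dE)
    (U : Matrix (Fin dB × Fin dE) (Fin dA) ℂ) (hU : Uᴴ * U = 1)
    (ρ ρhat : Matrix (Fin dA) (Fin dA) ℂ) (hρ : IsState ρ) (hρhat : IsState ρhat)
    (hsB : suppLE (chanB U ρ) (chanB U ρhat)) (hsE : suppLE (chanE U ρ) (chanE U ρhat))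
    (f : ℝ → ℝ)
    (hf : ∀ lam ∈ Set.Icc (0 : ℝ) 1, f lam =
      (lam * relEntropy (chanB U ρ) (chanB U ((lam : ℂ) • ρ + (1 - (lam : ℂ)) • ρhat))
        + (1 - lam) *
          relEntropy (chanB U ρhat) (chanB U ((lam : ℂ) • ρ + (1 - (lam : ℂ)) • ρhat)))
      - (lam * relEntropy (chanE U ρ) (chanE U ((lam : ℂ) • ρ + (1 - (lam : ℂ)) • ρhat))
        + (1 - lam) *
          relEntropy (chanE U ρhat) (chanE U ((lam : ℂ) • ρ + (1 - (lam : ℂ)) • ρhat)))) :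
    f 0 = 0 ∧ HasDerivWithinAt f
      (relEntropy (chanB U ρ) (chanB U ρhat) - relEntropy (chanE U ρ) (chanE U ρhat))
      (Set.Icc (0 : ℝ) 1) 0 :=
  divergence_difference_right_derivative_at_zero_general U ρ ρhat hρ hρhat hsB hsE f hf

end
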